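/- arXiv:2103.09579 — 2 statements merged into one kernel-verified Lean document; each statement's English description precedes it below -/
import Mathlib

section
/- Let 1/2 < H < 1 and let 1 ≤ p < 1/(2H−1). Then the function ψ_H(t) = 4 sin²(πt) · ( ∑_{n=0}^∞ (n+t)^{-(2H+1)} + ∑_{n=0}^∞ (n+1−t)^{-(2H+1)} ) belongs to L^p((0,1), dt), i.e. ∫_0^1 ψ_H(t)^p dt < ∞. -/
open MeasureTheory
open scoped ENNReal

/-- The spectral density (up to a normalizing constant) of fractional Gaussian noise of
Hurst index `H`, defined for `t ∈ (0,1)`: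
`ψ_H(t) = 4 sin²(πt)·(∑_{n≥0} (n+t)^{-(2H+1)} + ∑_{n≥0} (n+1−t)^{-(2H+1)})`. -/
noncomputable def psi (H t : ℝ) : ℝ :=
  4 * Real.sin (Real.pi * t) ^ 2 *
    ((∑' n : ℕ, ((n : ℝ) + t) ^ (-(2 * H + 1))) +
      ∑' n : ℕ, ((n : ℝ) + 1 - t) ^ (-(2 * H + 1)))

/-!
Since `n + s ≥ (n + 1) s` for `s ∈ (0, 1]`, the series `∑ (n + s)^{-a}` is at most
`ζ(a) s^{-a}`, while `sin² (π s) ≤ π² s²`. As `sin (π t) = sin (π (1 - t))`, this gives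
`ψ_H(t) ≤ C (t^{1-2H} + (1-t)^{1-2H})` on `(0, 1)`, so `ψ_H^p` is dominated by
`t^{p(1-2H)} + (1-t)^{p(1-2H)}`, which is integrable exactly when `p (2H - 1) < 1`.
-/

open Real Set

lemma Real.add_rpow_le_two_rpow_mul_rpow_add_rpow {a b p : ℝ} (ha : 0 ≤ a) (hb : 0 ≤ b)
    (hp : 0 ≤ p) : (a + b) ^ p ≤ 2 ^ p * (a ^ p + b ^ p) := by
  have hmax : 0 ≤ max a b := le_max_of_le_left ha
  calc (a + b) ^ p ≤ (2 * max a b) ^ p :=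
        rpow_le_rpow (by positivity) (by linarith [le_max_left a b, le_max_right a b]) hp
    _ = 2 ^ p * max a b ^ p := mul_rpow zero_le_two hmax
    _ ≤ 2 ^ p * (a ^ p + b ^ p) := by
        gcongr
        rcases le_total a b with h | h
        · simp [h, rpow_nonneg ha]
        · simp [h, rpow_nonneg hb]

lemma summable_nat_add_one_rpow_neg {a : ℝ} (ha : 1 < a) :
    Summable fun n : ℕ => ((n : ℝ) + 1) ^ (-a) := by
  have h := (summable_nat_add_iff 1).2 (summable_nat_rpow.2 (neg_lt_neg ha))
  exact h.congr fun n => by push_cast; rfl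

lemma nat_add_rpow_neg_le {a s : ℝ} (ha : 0 ≤ a) (hs0 : 0 < s) (hs1 : s ≤ 1) (n : ℕ) :
    ((n : ℝ) + s) ^ (-a) ≤ ((n : ℝ) + 1) ^ (-a) * s ^ (-a) := by
  have hn : (0 : ℝ) ≤ n := n.cast_nonneg
  calc ((n : ℝ) + s) ^ (-a) ≤ (((n : ℝ) + 1) * s) ^ (-a) :=
        rpow_le_rpow_of_nonpos (by positivity) (by nlinarith) (neg_nonpos.2 ha)
    _ = ((n : ℝ) + 1) ^ (-a) * s ^ (-a) := mul_rpow (by positivity) hs0.le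

lemma tsum_nat_add_rpow_neg_le {a s : ℝ} (ha : 1 < a) (hs0 : 0 < s) (hs1 : s ≤ 1) :
    ∑' n : ℕ, ((n : ℝ) + s) ^ (-a) ≤ (∑' n : ℕ, ((n : ℝ) + 1) ^ (-a)) * s ^ (-a) := by
  have hle := nat_add_rpow_neg_le (a := a) (by linarith) hs0 hs1
  have hsum := (summable_nat_add_one_rpow_neg ha).mul_right (s ^ (-a))
  rw [← tsum_mul_right]
  exact (hsum.of_nonneg_of_le (fun n => rpow_nonneg (by positivity) _) hle).tsum_le_tsum hle hsum

noncomputable def psiHalf (H s : ℝ) : ℝ :=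
  4 * sin (π * s) ^ 2 * ∑' n : ℕ, ((n : ℝ) + s) ^ (-(2 * H + 1))

lemma psi_eq_psiHalf_add_psiHalf_one_sub (H t : ℝ) :
    psi H t = psiHalf H t + psiHalf H (1 - t) := by
  have hsin : sin (π * (1 - t)) = sin (π * t) := by
    rw [mul_one_sub, sin_pi_sub]
  simp only [psi, psiHalf, hsin, ← add_sub_assoc, mul_add]

lemma psiHalf_nonneg (H : ℝ) {s : ℝ} (hs : 0 ≤ s) : 0 ≤ psiHalf H s :=
  mul_nonneg (by positivity) (tsum_nonneg fun _ => rpow_nonneg (by positivity) _)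

noncomputable def psiConst (H : ℝ) : ℝ :=
  4 * π ^ 2 * ∑' n : ℕ, ((n : ℝ) + 1) ^ (-(2 * H + 1))

lemma psiConst_nonneg (H : ℝ) : 0 ≤ psiConst H :=
  mul_nonneg (by positivity) (tsum_nonneg fun _ => rpow_nonneg (by positivity) _)

lemma psiHalf_le {H s : ℝ} (hH : 0 < H) (hs0 : 0 < s) (hs1 : s ≤ 1) :
    psiHalf H s ≤ psiConst H * s ^ (1 - 2 * H) := by
  set Z := ∑' n : ℕ, ((n : ℝ) + 1) ^ (-(2 * H + 1))
  have hpow : s ^ 2 * s ^ (-(2 * H + 1)) = s ^ (1 - 2 * H) := by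
    rw [← rpow_natCast, ← rpow_add hs0]
    congr 1
    push_cast
    ring
  calc psiHalf H s ≤ 4 * (π * s) ^ 2 * (Z * s ^ (-(2 * H + 1))) := by
        exact mul_le_mul (by linarith [sin_sq_le_sq (x := π * s)])
          (tsum_nat_add_rpow_neg_le (by linarith) hs0 hs1)
          (tsum_nonneg fun _ => rpow_nonneg (by positivity) _) (by positivity)
    _ = psiConst H * s ^ (1 - 2 * H) := by rw [psiConst, ← hpow]; ring

lemma psi_rpow_le {H p t : ℝ} (hH : 0 < H) (hp : 0 ≤ p) (ht : t ∈ Ioo (0 : ℝ) 1) :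
    psi H t ^ p ≤
      (2 * psiConst H) ^ p * (t ^ (p * (1 - 2 * H)) + (1 - t) ^ (p * (1 - 2 * H))) := by
  obtain ⟨ht0, ht1⟩ := ht
  set C := psiConst H
  have hC : 0 ≤ C := psiConst_nonneg H
  have hpsi : psi H t ≤ C * (t ^ (1 - 2 * H) + (1 - t) ^ (1 - 2 * H)) := by
    rw [psi_eq_psiHalf_add_psiHalf_one_sub, mul_add]
    exact add_le_add (psiHalf_le hH ht0 ht1.le) (psiHalf_le hH (by linarith) (by linarith))
  have hpsi0 : 0 ≤ psi H t := by
    rw [psi_eq_psiHalf_add_psiHalf_one_sub]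
    exact add_nonneg (psiHalf_nonneg H ht0.le) (psiHalf_nonneg H (by linarith))
  calc psi H t ^ p ≤ (C * (t ^ (1 - 2 * H) + (1 - t) ^ (1 - 2 * H))) ^ p :=
        rpow_le_rpow hpsi0 hpsi hp
    _ ≤ C ^ p * (2 ^ p * ((t ^ (1 - 2 * H)) ^ p + ((1 - t) ^ (1 - 2 * H)) ^ p)) := by
        rw [mul_rpow hC (by positivity)]
        gcongr
        exact add_rpow_le_two_rpow_mul_rpow_add_rpow (by positivity) (by positivity) hp
    _ = (2 * C) ^ p * (t ^ (p * (1 - 2 * H)) + (1 - t) ^ (p * (1 - 2 * H))) := by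
        rw [mul_rpow zero_le_two hC, ← rpow_mul ht0.le, ← rpow_mul (by linarith)]
        ring_nf

lemma integrableOn_Ioo_rpow_add_one_sub_rpow {β : ℝ} (hβ : -1 < β) :
    IntegrableOn (fun t : ℝ => t ^ β + (1 - t) ^ β) (Ioo 0 1) := by
  have hleft : IntervalIntegrable (fun t : ℝ => t ^ β) volume 0 1 :=
    intervalIntegral.intervalIntegrable_rpow' hβ
  have hright : IntervalIntegrable (fun t : ℝ => (1 - t) ^ β) volume 0 1 := by
    simpa using (hleft.comp_sub_left 1).symm
  exact (intervalIntegrable_iff_integrableOn_Ioo_of_le zero_le_one).1 (hleft.add hright)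

theorem stmt4_general (H p : ℝ) (hH0 : 1 / 2 < H)
    (hp1 : 1 ≤ p) (hp2 : p < 1 / (2 * H - 1)) :
    ∫⁻ t in Set.Ioo (0 : ℝ) 1, ENNReal.ofReal (psi H t ^ p) < ⊤ := by
  have hβ : -1 < p * (1 - 2 * H) := by
    have := (lt_div_iff₀ (by linarith : (0 : ℝ) < 2 * H - 1)).1 hp2
    linarith
  set K := (2 * psiConst H) ^ p
  calc ∫⁻ t in Ioo (0 : ℝ) 1, ENNReal.ofReal (psi H t ^ p)
      ≤ ∫⁻ t in Ioo (0 : ℝ) 1,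
          ENNReal.ofReal (K * (t ^ (p * (1 - 2 * H)) + (1 - t) ^ (p * (1 - 2 * H)))) :=
        setLIntegral_mono' measurableSet_Ioo fun t ht =>
          ENNReal.ofReal_le_ofReal (psi_rpow_le (by linarith) (by linarith) ht)
    _ < ⊤ := ((integrableOn_Ioo_rpow_add_one_sub_rpow hβ).const_mul K).lintegral_lt_top

/-- For `1/2 < H < 1` and `1 ≤ p < 1/(2H−1)`, the function `ψ_H`
belongs to `L^p((0,1), dt)`, i.e. `∫_0^1 ψ_H(t)^p dt < ∞`. -/
theorem stmt4 (H p : ℝ) (hH0 : 1 / 2 < H) (hH1 : H < 1)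
    (hp1 : 1 ≤ p) (hp2 : p < 1 / (2 * H - 1)) :
    ∫⁻ t in Set.Ioo (0 : ℝ) 1, ENNReal.ofReal (psi H t ^ p) < ⊤ :=
  stmt4_general H p hH0 hp1 hp2
end

section
/- Let 0 < H₁ ≤ H₂ < 1 and define ψ_H(t) = 4 sin²(πt) · ( ∑_{n=0}^∞ (n+t)^{-(2H+1)} + ∑_{n=0}^∞ (n+1−t)^{-(2H+1)} ) for t ∈ (0,1). Then there exists a constant M > 0 (depending only on H₁ and H₂) such that ψ_{H₁}(t) ≤ M · ψ_{H₂}(t) for all t ∈ (0,1). -/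
/-!
With `ζ(p, s) = hurwitzSum p s = ∑_{n ≥ 0} (n + s)^{-p}` we have
`ψ_H(t) = 4 sin²(πt) (ζ(p, t) + ζ(p, 1 - t))` with `p = 2H + 1 > 1`. For `0 < s ≤ 1` and `1 < p ≤ q`, the singular first term obeys
`s^{-p} ≤ s^{-q}`, while the tail `ζ(p, s + 1) ≤ ζ(p, 1)` is bounded and `1 ≤ s^{-q}`; hence
`ζ(p, s) ≤ (1 + ζ(p, 1)) s^{-q} ≤ (1 + ζ(p, 1)) ζ(q, s)`, and `M = 1 + ζ(2H₁ + 1, 1)` works.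
-/

open Real

noncomputable def hurwitzSum (p s : ℝ) : ℝ :=
  ∑' n : ℕ, ((n : ℝ) + s) ^ (-p)

section HurwitzSum

variable {p q s s' : ℝ}

lemma summable_nat_add_rpow_neg (hp : 1 < p) (hs : 0 ≤ s) :
    Summable fun n : ℕ => ((n : ℝ) + s) ^ (-p) := by
  refine ((summable_one_div_nat_add_rpow s p).mpr hp).congr fun n => ?_
  have hns : 0 ≤ (n : ℝ) + s := by positivity
  rw [abs_of_nonneg hns, rpow_neg hns, one_div]

lemma hurwitzSum_nonneg (hs : 0 ≤ s) : 0 ≤ hurwitzSum p s :=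
  tsum_nonneg fun n => rpow_nonneg (by positivity) _

lemma hurwitzSum_eq_rpow_neg_add (hp : 1 < p) (hs : 0 ≤ s) :
    hurwitzSum p s = s ^ (-p) + hurwitzSum p (s + 1) := by
  unfold hurwitzSum
  rw [(summable_nat_add_rpow_neg hp hs).tsum_eq_zero_add]
  congr 1
  · simp
  · congr 1 with n
    push_cast
    ring_nf

lemma rpow_neg_le_hurwitzSum (hq : 1 < q) (hs : 0 ≤ s) : s ^ (-q) ≤ hurwitzSum q s := by
  simpa [hurwitzSum] using
    (summable_nat_add_rpow_neg hq hs).le_tsum 0 fun n _ => rpow_nonneg (by positivity) _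

lemma hurwitzSum_le_of_le (hp : 1 < p) (hs : 0 < s) (hss' : s ≤ s') :
    hurwitzSum p s' ≤ hurwitzSum p s :=
  (summable_nat_add_rpow_neg hp (hs.le.trans hss')).tsum_le_tsum
    (fun n => rpow_le_rpow_of_nonpos (by positivity) (by linarith) (by linarith))
    (summable_nat_add_rpow_neg hp hs.le)

lemma hurwitzSum_le_mul_hurwitzSum (hp : 1 < p) (hpq : p ≤ q) (hs : 0 < s) (hs1 : s ≤ 1) :
    hurwitzSum p s ≤ (1 + hurwitzSum p 1) * hurwitzSum q s := by
  have hζ : 0 ≤ hurwitzSum p 1 := hurwitzSum_nonneg zero_le_one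
  have hsq : 1 ≤ s ^ (-q) := one_le_rpow_of_pos_of_le_one_of_nonpos hs hs1 (by linarith)
  calc hurwitzSum p s = s ^ (-p) + hurwitzSum p (s + 1) := hurwitzSum_eq_rpow_neg_add hp hs.le
    _ ≤ s ^ (-q) + hurwitzSum p 1 :=
        add_le_add (rpow_le_rpow_of_exponent_ge hs hs1 (neg_le_neg hpq))
          (hurwitzSum_le_of_le hp one_pos (by linarith))
    _ ≤ s ^ (-q) + hurwitzSum p 1 * s ^ (-q) := by gcongr; exact le_mul_of_one_le_right hζ hsq
    _ = (1 + hurwitzSum p 1) * s ^ (-q) := by ring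
    _ ≤ (1 + hurwitzSum p 1) * hurwitzSum q s := by
        gcongr; exact rpow_neg_le_hurwitzSum (hp.trans_le hpq) hs.le

end HurwitzSum

lemma psi_eq_hurwitzSum (H t : ℝ) :
    psi H t = 4 * sin (π * t) ^ 2 *
      (hurwitzSum (2 * H + 1) t + hurwitzSum (2 * H + 1) (1 - t)) := by
  simp only [psi, hurwitzSum, add_sub_assoc]

theorem stmt7_general (H₁ H₂ : ℝ) (h1 : 0 < H₁) (h12 : H₁ ≤ H₂) :
    ∃ M > 0, ∀ t ∈ Set.Ioo (0 : ℝ) 1, psi H₁ t ≤ M * psi H₂ t := by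
  have hp : 1 < 2 * H₁ + 1 := by linarith
  have hpq : 2 * H₁ + 1 ≤ 2 * H₂ + 1 := by linarith
  have hζ : 0 ≤ hurwitzSum (2 * H₁ + 1) 1 := hurwitzSum_nonneg zero_le_one
  refine ⟨1 + hurwitzSum (2 * H₁ + 1) 1, by linarith, fun t ⟨ht0, ht1⟩ => ?_⟩
  have hleft := hurwitzSum_le_mul_hurwitzSum hp hpq ht0 ht1.le
  have hright := hurwitzSum_le_mul_hurwitzSum hp hpq (s := 1 - t) (by linarith) (by linarith)
  rw [psi_eq_hurwitzSum, psi_eq_hurwitzSum, mul_left_comm]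
  gcongr
  linarith

/-- For `0 < H₁ ≤ H₂ < 1` there is `M > 0` (depending only on
`H₁, H₂`) with `ψ_{H₁}(t) ≤ M · ψ_{H₂}(t)` for all `t ∈ (0,1)`. -/
theorem stmt7 (H₁ H₂ : ℝ) (h1 : 0 < H₁) (h12 : H₁ ≤ H₂) (h2 : H₂ < 1) :
    ∃ M > 0, ∀ t ∈ Set.Ioo (0 : ℝ) 1, psi H₁ t ≤ M * psi H₂ t :=
  stmt7_general H₁ H₂ h1 h12
end
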